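/- Let n be a standard complex Gaussian and let a = μ̄_y q_y − μ̄_x q_x ≠ 0 with |q_x| = |q_y|. Define X = μ_x + q_x n and Y = μ_y + q_y n. Then Pr(|X|² > |Y|²) = (1/2)[1 + erf((|μ_x|² − |μ_y|²)/(2|a|))] and in particular Pr(|X|² > |Y|²) = 1/2 when |μ_x| = |μ_y|. -/

import Mathlib

open MeasureTheory ProbabilityTheory

/-- The Gauss error function `erf t = (2/√π) ∫₀ᵗ e^{−s²} ds`. -/
noncomputable def erf (t : ℝ) : ℝ :=
  (2 / Real.sqrt Real.pi) * ∫ s in (0 : ℝ)..t, Real.exp (-(s ^ 2))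

/-!
Since `|q_x| = |q_y|`, the quadratic terms in `|X|² − |Y|²` cancel and
`|X|² − |Y|² = |μ_x|² − |μ_y|² − 2 Re(a n)`, so the event is the half-plane
`Re(a n) < (|μ_x|² − |μ_y|²)/2`. Writing `Re(a n) = Re a · Re n − Im a · Im n` as a sum of
independent centred Gaussians, `Re(a n) ∼ N(0, |a|²/2) = |a| · N(0, 1/2)`, and `N(0, 1/2)` is
the normalisation in which `erf` is the distribution function: `Pr(N(0,1/2) < t) = (1 + erf t)/2`.
-/

open Set Real NNReal

lemma norm_add_mul_sq (μ q z : ℂ) :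
    ‖μ + q * z‖ ^ 2 = ‖μ‖ ^ 2 + 2 * ((starRingEnd ℂ) μ * q * z).re + ‖q‖ ^ 2 * ‖z‖ ^ 2 := by
  have hre : ((starRingEnd ℂ) μ * q * z).re = (μ * (starRingEnd ℂ) (q * z)).re := by
    rw [← Complex.conj_re]
    simp [mul_assoc]
  simp only [Complex.sq_norm, Complex.normSq_add, Complex.normSq_mul, hre]
  ring

lemma norm_add_mul_sq_lt_iff {μx μy qx qy : ℂ} (hq : ‖qx‖ = ‖qy‖) (z : ℂ) :
    ‖μy + qy * z‖ ^ 2 < ‖μx + qx * z‖ ^ 2 ↔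
      (((starRingEnd ℂ) μy * qy - (starRingEnd ℂ) μx * qx) * z).re
        < (‖μx‖ ^ 2 - ‖μy‖ ^ 2) / 2 := by
  rw [norm_add_mul_sq, norm_add_mul_sq, hq, sub_mul, Complex.sub_re]
  constructor <;> intro h <;> linarith

lemma integral_Iic_zero_exp_neg_sq : ∫ x in Iic (0 : ℝ), exp (-x ^ 2) = √π / 2 := by
  have h := integral_comp_neg_Iic 0 (fun x ↦ exp (-x ^ 2))
  simp only [neg_sq, neg_zero] at h
  simpa [h] using integral_gaussian_Ioi 1

lemma gaussianPDFReal_zero_half (x : ℝ) :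
    gaussianPDFReal 0 (1 / 2) x = (√π)⁻¹ * exp (-x ^ 2) := by
  rw [gaussianPDFReal]
  push_cast
  congr 3 <;> ring

lemma gaussianReal_half_Iio_toReal (t : ℝ) :
    (gaussianReal 0 (1 / 2) (Iio t)).toReal = 1 / 2 * (1 + erf t) := by
  have hint : Integrable (fun x : ℝ ↦ exp (-x ^ 2)) := by
    simpa using integrable_exp_neg_mul_sq (b := (1 : ℝ)) one_pos
  have hIic : ∫ x in Iic t, exp (-x ^ 2) = √π / 2 + ∫ s in (0 : ℝ)..t, exp (-s ^ 2) := by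
    have h := intervalIntegral.integral_Iic_sub_Iic (a := 0) (b := t) hint.integrableOn
      hint.integrableOn
    rw [integral_Iic_zero_exp_neg_sq] at h
    linarith
  rw [gaussianReal_apply_eq_integral _ (by norm_num), ENNReal.toReal_ofReal
    (setIntegral_nonneg measurableSet_Iio fun x _ ↦ gaussianPDFReal_nonneg _ _ x),
    setIntegral_congr_set Iio_ae_eq_Iic]
  simp only [gaussianPDFReal_zero_half, integral_const_mul, hIic, erf]
  have : √π ≠ 0 := by positivity
  field_simp

lemma gaussianReal_Iio_toReal (σ : ℝ≥0) (hσ : σ ≠ 0) (t : ℝ) :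
    (gaussianReal 0 (σ ^ 2 / 2) (Iio t)).toReal = 1 / 2 * (1 + erf (t / σ)) := by
  have hσ' : (0 : ℝ) < σ := by positivity
  have hmap : (gaussianReal 0 (1 / 2)).map ((σ : ℝ) * ·) = gaussianReal 0 (σ ^ 2 / 2) := by
    rw [gaussianReal_map_const_mul, mul_zero]
    congr 1
    ext
    simp [div_eq_mul_inv]
  have hpre : ((σ : ℝ) * ·) ⁻¹' Iio t = Iio (t / σ) := by
    ext x
    simp [lt_div_iff₀ hσ', mul_comm]
  rw [← hmap, Measure.map_apply (measurable_const_mul _) measurableSet_Iio, hpre,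
    gaussianReal_half_Iio_toReal]

section ComplexGaussian

variable {Ω : Type*} [MeasurableSpace Ω] {P : Measure Ω} {Z : Ω → ℂ} {v : ℝ≥0}

lemma hasLaw_re_mul_gaussianReal (hre : HasLaw (fun ω ↦ (Z ω).re) (gaussianReal 0 v) P)
    (him : HasLaw (fun ω ↦ (Z ω).im) (gaussianReal 0 v) P)
    (hindep : IndepFun (fun ω ↦ (Z ω).re) (fun ω ↦ (Z ω).im) P) (a : ℂ) :
    HasLaw (fun ω ↦ (a * Z ω).re) (gaussianReal 0 (‖a‖₊ ^ 2 * v)) P := by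
  have h₁ := gaussianReal_const_mul hre a.re
  have h₂ := gaussianReal_const_mul him (-a.im)
  have hsum := gaussianReal_add_gaussianReal_of_indepFun
    (hindep.comp (measurable_const_mul a.re) (measurable_const_mul (-a.im))) h₁.map_eq h₂.map_eq
  have hsplit : (fun ω ↦ (a * Z ω).re) =
      (fun ω ↦ a.re * (Z ω).re) + (fun ω ↦ -a.im * (Z ω).im) := by
    ext ω
    simp [Complex.mul_re, sub_eq_add_neg]
  rw [hsplit]
  refine ⟨h₁.aemeasurable.add h₂.aemeasurable, hsum.trans ?_⟩
  congr 1
  · simp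
  · ext
    simp only [NNReal.coe_add, NNReal.coe_mul, coe_mk, coe_pow, coe_nnnorm, Complex.sq_norm,
      Complex.normSq_apply]
    ring

end ComplexGaussian

theorem lemma1_equal_variance_case_general {Ω : Type*} [MeasureSpace Ω]
    (n : Ω → ℂ) (hmeas : Measurable n)
    (hre : Measure.map (fun ω => (n ω).re) ℙ = gaussianReal 0 (1/2))
    (him : Measure.map (fun ω => (n ω).im) ℙ = gaussianReal 0 (1/2))
    (hindep : IndepFun (fun ω => (n ω).re) (fun ω => (n ω).im) ℙ)
    (μx μy qx qy a : ℂ) (hq : ‖qx‖ = ‖qy‖)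
    (hadef : a = (starRingEnd ℂ) μy * qy - (starRingEnd ℂ) μx * qx) (ha : a ≠ 0)
    (X Y : Ω → ℂ) (hX : ∀ ω, X ω = μx + qx * n ω) (hY : ∀ ω, Y ω = μy + qy * n ω) :
    (ℙ {ω | (‖Y ω‖) ^ 2 < (‖X ω‖) ^ 2}).toReal =
      (1 / 2) * (1 + erf (((‖μx‖) ^ 2 - (‖μy‖) ^ 2) /
        (2 * ‖a‖))) ∧
    (‖μx‖ = ‖μy‖ →
      (ℙ {ω | (‖Y ω‖) ^ 2 < (‖X ω‖) ^ 2}).toReal = 1 / 2) := by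
  have hlaw : HasLaw (fun ω ↦ (a * n ω).re) (gaussianReal 0 (‖a‖₊ ^ 2 / 2)) ℙ := by
    simpa [div_eq_mul_inv] using
      hasLaw_re_mul_gaussianReal ⟨by fun_prop, hre⟩ ⟨by fun_prop, him⟩ hindep a
  have hevent : {ω | ‖Y ω‖ ^ 2 < ‖X ω‖ ^ 2} =
      {ω | (a * n ω).re < (‖μx‖ ^ 2 - ‖μy‖ ^ 2) / 2} := by
    ext ω
    simp only [mem_ofPred_eq, hX, hY, hadef, norm_add_mul_sq_lt_iff hq]
  have hprob : (ℙ {ω | ‖Y ω‖ ^ 2 < ‖X ω‖ ^ 2}).toReal =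
      1 / 2 * (1 + erf ((‖μx‖ ^ 2 - ‖μy‖ ^ 2) / (2 * ‖a‖))) := by
    rw [hevent, hlaw.measure_eq measurableSet_Iio, Iio_def,
      gaussianReal_Iio_toReal _ (nnnorm_ne_zero_iff.mpr ha), coe_nnnorm, div_div]
  refine ⟨hprob, fun hμ ↦ ?_⟩
  rw [hprob, hμ, sub_self, zero_div, erf, intervalIntegral.integral_same]
  norm_num

/-- Equal-variance case of Lemma 1: with `|q_x| = |q_y|` and `a = μ̄_y q_y − μ̄_x q_x ≠ 0`,
`Pr(|X|² > |Y|²) = (1/2)[1 + erf((|μ_x|² − |μ_y|²)/(2|a|))]`, and in particular equals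
`1/2` when `|μ_x| = |μ_y|`. -/
theorem lemma1_equal_variance_case {Ω : Type*} [MeasureSpace Ω]
    (hprob : IsProbabilityMeasure (ℙ : Measure Ω))
    (n : Ω → ℂ) (hmeas : Measurable n)
    (hre : Measure.map (fun ω => (n ω).re) ℙ = gaussianReal 0 (1/2))
    (him : Measure.map (fun ω => (n ω).im) ℙ = gaussianReal 0 (1/2))
    (hindep : IndepFun (fun ω => (n ω).re) (fun ω => (n ω).im) ℙ)
    (μx μy qx qy a : ℂ) (hq : ‖qx‖ = ‖qy‖)
    (hadef : a = (starRingEnd ℂ) μy * qy - (starRingEnd ℂ) μx * qx) (ha : a ≠ 0)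
    (X Y : Ω → ℂ) (hX : ∀ ω, X ω = μx + qx * n ω) (hY : ∀ ω, Y ω = μy + qy * n ω) :
    (ℙ {ω | (‖Y ω‖) ^ 2 < (‖X ω‖) ^ 2}).toReal =
      (1 / 2) * (1 + erf (((‖μx‖) ^ 2 - (‖μy‖) ^ 2) /
        (2 * ‖a‖))) ∧
    (‖μx‖ = ‖μy‖ →
      (ℙ {ω | (‖Y ω‖) ^ 2 < (‖X ω‖) ^ 2}).toReal = 1 / 2) :=
  lemma1_equal_variance_case_general n hmeas hre him hindep μx μy qx qy a hq hadef ha X Y hX hY
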